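/- There is a functor S : Track_O → Track_O together with a natural transformation s : S → Id such that for every track category X with object set O: (a) the underlying category (S X)_0 = FVX_0 of objects and 1-arrows of S X is a free category, and (b) the map s_X : S(X) → X is a 2-equivalence, i.e. it is the identity on objects and each induced functor S(X)(a,b) → X(a,b) on hom-groupoids is an equivalence of groupoids. Explicitly, S X = X(ε_{X_0}) is obtained by pulling back the arrows of X along ε_{X_0} × ε_{X_0}, where ε_{X_0} : FVX_0 → X_0 is the counit of the free-category adjunction. -/

import Mathlib

/-!
STATEMENT 15: There is a functor `S : Track_O → Track_O` together with a natural
transformation `s : S → Id` such that for every track category `X` with object set `O`: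
(a) the underlying category `(S X)₀ = FVX₀` of objects and 1-arrows of `S X` is a free
category, and (b) the map `s_X : S(X) → X` is a 2-equivalence, i.e. it is the identity on
objects and each induced functor `S(X)(a,b) → X(a,b)` on hom-groupoids is an equivalence
of groupoids.  (Explicitly, `S X = X(ε_{X₀})` is obtained by pulling back the arrows of
`X` along `ε_{X₀} × ε_{X₀}`, where `ε_{X₀} : FVX₀ → X₀` is the counit of the
free-category adjunction.)

Track categories with object set `O` are constructed concretely as strict groupoid-
enriched categories (`TrackO`), with morphisms (`TrackOHom`) the enriched functors that
are the identity on objects; `Cat_O` and freeness of a category in `Cat_O` (via the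
universal property of the free category on a graph) are also concrete.
-/

open CategoryTheory

universe u

/-- A small category with object set `O` (an object of `Cat_O`). -/
structure CatO (O : Type u) : Type (u + 1) where
  Hom : O → O → Type u
  id : ∀ a, Hom a a
  comp : ∀ {a b c}, Hom a b → Hom b c → Hom a c
  id_comp : ∀ {a b} (f : Hom a b), comp (id a) f = f
  comp_id : ∀ {a b} (f : Hom a b), comp f (id b) = f
  assoc : ∀ {a b c d} (f : Hom a b) (g : Hom b c) (h : Hom c d),
    comp (comp f g) h = comp f (comp g h)

variable {O : Type u}

/-- A morphism in `Cat_O`: a functor which is the identity on objects. -/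
structure CatOHom (A B : CatO O) where
  map : ∀ {a b}, A.Hom a b → B.Hom a b
  map_id : ∀ a, map (A.id a) = B.id a
  map_comp : ∀ {a b c} (f : A.Hom a b) (g : A.Hom b c),
    map (A.comp f g) = B.comp (map f) (map g)

/-- A category in `Cat_O` is *free* if it is freely generated by a directed graph
(formulated via the universal property of the free category on a graph). -/
def CatO.IsFree (A : CatO O) : Prop :=
  ∃ (G : O → O → Type u) (ι : ∀ {a b}, G a b → A.Hom a b),
    ∀ (B : CatO O) (f : ∀ {a b}, G a b → B.Hom a b),
      ∃! F : CatOHom A B, ∀ {a b} (g : G a b), F.map (ι g) = f g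

/-- A track category with object set `O`: a (strict) category enriched in groupoids,
with 1-cells `Hom`, vertical (groupoid) structure `Two`, `vid`, `vcomp`, `vinv`, and
horizontal composition `hcomp` of 2-cells. -/
structure TrackO (O : Type u) : Type (u + 1) where
  Hom : O → O → Type u
  id : ∀ a, Hom a a
  comp : ∀ {a b c}, Hom a b → Hom b c → Hom a c
  id_comp : ∀ {a b} (f : Hom a b), comp (id a) f = f
  comp_id : ∀ {a b} (f : Hom a b), comp f (id b) = f
  assoc : ∀ {a b c d} (f : Hom a b) (g : Hom b c) (h : Hom c d),
    comp (comp f g) h = comp f (comp g h)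
  Two : ∀ {a b}, Hom a b → Hom a b → Type u
  vid : ∀ {a b} (f : Hom a b), Two f f
  vcomp : ∀ {a b} {f g h : Hom a b}, Two f g → Two g h → Two f h
  vid_comp : ∀ {a b} {f g : Hom a b} (α : Two f g), vcomp (vid f) α = α
  vcomp_id : ∀ {a b} {f g : Hom a b} (α : Two f g), vcomp α (vid g) = α
  vassoc : ∀ {a b} {f g h k : Hom a b} (α : Two f g) (β : Two g h) (γ : Two h k),
    vcomp (vcomp α β) γ = vcomp α (vcomp β γ)
  vinv : ∀ {a b} {f g : Hom a b}, Two f g → Two g f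
  vinv_vcomp : ∀ {a b} {f g : Hom a b} (α : Two f g), vcomp (vinv α) α = vid g
  vcomp_vinv : ∀ {a b} {f g : Hom a b} (α : Two f g), vcomp α (vinv α) = vid f
  hcomp : ∀ {a b c} {f f' : Hom a b} {g g' : Hom b c},
    Two f f' → Two g g' → Two (comp f g) (comp f' g')
  hcomp_vid : ∀ {a b c} (f : Hom a b) (g : Hom b c),
    hcomp (vid f) (vid g) = vid (comp f g)
  interchange : ∀ {a b c} {f f' f'' : Hom a b} {g g' g'' : Hom b c}
    (α : Two f f') (α' : Two f' f'') (β : Two g g') (β' : Two g' g''),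
    hcomp (vcomp α α') (vcomp β β') = vcomp (hcomp α β) (hcomp α' β')

/-- The underlying category `X₀` of objects and 1-arrows of a track category. -/
def TrackO.underlying (X : TrackO O) : CatO O :=
  ⟨X.Hom, X.id, X.comp, X.id_comp, X.comp_id, X.assoc⟩

/-- A morphism of track categories with object set `O`: a groupoid-enriched functor which
is the identity on objects. -/
structure TrackOHom (X Y : TrackO O) where
  map1 : ∀ {a b}, X.Hom a b → Y.Hom a b
  map2 : ∀ {a b} {f g : X.Hom a b}, X.Two f g → Y.Two (map1 f) (map1 g)
  map1_id : ∀ a, map1 (X.id a) = Y.id a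
  map1_comp : ∀ {a b c} (f : X.Hom a b) (g : X.Hom b c),
    map1 (X.comp f g) = Y.comp (map1 f) (map1 g)
  map2_vid : ∀ {a b} (f : X.Hom a b), map2 (X.vid f) = Y.vid (map1 f)
  map2_vcomp : ∀ {a b} {f g h : X.Hom a b} (α : X.Two f g) (β : X.Two g h),
    map2 (X.vcomp α β) = Y.vcomp (map2 α) (map2 β)

/-- Composition of morphisms of track categories. -/
def TrackOHom.comp' {X Y Z : TrackO O} (F : TrackOHom X Y) (G : TrackOHom Y Z) :
    TrackOHom X Z where
  map1 f := G.map1 (F.map1 f)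
  map2 α := G.map2 (F.map2 α)
  map1_id a := by show G.map1 (F.map1 _) = _; rw [F.map1_id, G.map1_id]
  map1_comp f g := by show G.map1 (F.map1 _) = _; rw [F.map1_comp, G.map1_comp]
  map2_vid f := by show G.map2 (F.map2 _) = _; rw [F.map2_vid, G.map2_vid]
  map2_vcomp α β := by show G.map2 (F.map2 _) = _; rw [F.map2_vcomp, G.map2_vcomp]

/-- `F : X → Y` is a 2-equivalence: it is the identity on objects (by construction), and
each induced functor on hom-groupoids `X(a,b) → Y(a,b)` is an equivalence of groupoids
(fully faithful on 2-cells and essentially surjective on 1-cells). -/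
def TrackOHom.Is2Equivalence {X Y : TrackO O} (F : TrackOHom X Y) : Prop :=
  (∀ {a b : O} (f g : X.Hom a b),
    Function.Bijective (fun α : X.Two f g => F.map2 α)) ∧
  (∀ {a b : O} (h : Y.Hom a b), ∃ f : X.Hom a b, Nonempty (Y.Two (F.map1 f) h))

/-!
`S X` is the track category `X(ε)` whose 1-cells are the paths of composable 1-cells of `X`
and whose 2-cells between two paths are the 2-cells of `X` between their composites. Its
underlying category is the free category on the graph of 1-cells, and since every 1-cell
is the composite of a path of length one, the evaluation `S X → X` is surjective on
1-cells and bijective on 2-cells, hence a 2-equivalence. Naturality holds because the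
evaluation commutes with mapping paths along a morphism.
-/

-- Mathlib's `Quiver.Path` of a graph with `Type u` arrows lives in `Type (u + 1)`, too large
-- for `CatO`.
inductive GraphPath (H : O → O → Type u) : O → O → Type u
  | nil (a : O) : GraphPath H a a
  | cons {a b c : O} : H a b → GraphPath H b c → GraphPath H a c

namespace GraphPath

variable {H : O → O → Type u}

def single {a b : O} (e : H a b) : GraphPath H a b := cons e (nil b)

def append : ∀ {a b c : O}, GraphPath H a b → GraphPath H b c → GraphPath H a c
  | _, _, _, nil _, q => q
  | _, _, _, cons e p, q => cons e (p.append q)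

theorem append_nil : ∀ {a b : O} (p : GraphPath H a b), p.append (nil b) = p
  | _, _, nil _ => rfl
  | _, _, cons e p => congrArg (cons e) (append_nil p)

theorem append_assoc : ∀ {a b c d : O} (p : GraphPath H a b) (q : GraphPath H b c)
    (r : GraphPath H c d), (p.append q).append r = p.append (q.append r)
  | _, _, _, _, nil _, _, _ => rfl
  | _, _, _, _, cons e p, q, r => congrArg (cons e) (append_assoc p q r)

end GraphPath

def CatO.free (H : O → O → Type u) : CatO O where
  Hom := GraphPath H
  id := GraphPath.nil
  comp := GraphPath.append
  id_comp _ := rfl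
  comp_id := GraphPath.append_nil
  assoc := GraphPath.append_assoc

theorem CatOHom.ext {A B : CatO O} {F G : CatOHom A B}
    (h : ∀ {a b : O} (f : A.Hom a b), F.map f = G.map f) : F = G := by
  obtain ⟨m, _, _⟩ := F
  obtain ⟨n, _, _⟩ := G
  obtain rfl : @m = @n := by funext a b f; exact h f
  rfl

namespace CatO

variable {H : O → O → Type u}

def liftPath (B : CatO O) (f : ∀ {a b : O}, H a b → B.Hom a b) :
    ∀ {a b : O}, GraphPath H a b → B.Hom a b
  | _, _, .nil a => B.id a
  | _, _, .cons e p => B.comp (f e) (liftPath B f p)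

theorem liftPath_append (B : CatO O) (f : ∀ {a b : O}, H a b → B.Hom a b) :
    ∀ {a b c : O} (p : GraphPath H a b) (q : GraphPath H b c),
      liftPath B f (p.append q) = B.comp (liftPath B f p) (liftPath B f q)
  | _, _, _, .nil _, _ => (B.id_comp _).symm
  | _, _, _, .cons e p, q => by
    rw [GraphPath.append, liftPath, liftPath, liftPath_append B f p q, B.assoc]

def lift (B : CatO O) (f : ∀ {a b : O}, H a b → B.Hom a b) : CatOHom (free H) B where
  map := liftPath B f
  map_id _ := rfl
  map_comp := liftPath_append B f

theorem lift_single (B : CatO O) (f : ∀ {a b : O}, H a b → B.Hom a b) {a b : O} (e : H a b) :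
    (lift B f).map (GraphPath.single e) = f e :=
  B.comp_id (f e)

theorem hom_ext_free {B : CatO O} {F G : CatOHom (free H) B}
    (h : ∀ {a b : O} (e : H a b), F.map (GraphPath.single e) = G.map (GraphPath.single e)) :
    F = G := by
  refine CatOHom.ext fun p => ?_
  induction p with
  | nil a => exact (F.map_id a).trans (G.map_id a).symm
  | cons e p ih =>
    have hF := F.map_comp (GraphPath.single e) p
    have hG := G.map_comp (GraphPath.single e) p
    exact hF.trans ((congrArg₂ B.comp (h e) ih).trans hG.symm)

theorem free_isFree (H : O → O → Type u) : (free H).IsFree :=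
  ⟨H, GraphPath.single, fun B f =>
    ⟨lift B f, fun e => lift_single B f e, fun _ hF => hom_ext_free fun e =>
      (hF e).trans (lift_single B f e).symm⟩⟩

end CatO

namespace TrackO

variable (X : TrackO O)

/-- The counit `ε : F V X₀ → X₀` of the free-category adjunction. -/
def counit : CatOHom (CatO.free X.Hom) X.underlying :=
  CatO.lift X.underlying fun e => e

theorem counit_surjective {a b : O} :
    Function.Surjective (X.counit.map : GraphPath X.Hom a b → X.Hom a b) :=
  fun h => ⟨GraphPath.single h, CatO.lift_single X.underlying _ h⟩

variable {X}

-- Needed because composition in `X(φ)` is preserved by `φ` only up to propositional equality.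
def castTwo {a b : O} {f f' g g' : X.Hom a b} (h : f = g) (h' : f' = g') (α : X.Two f f') :
    X.Two g g' :=
  h ▸ h' ▸ α

theorem castTwo_heq {a b : O} {f f' g g' : X.Hom a b} (h : f = g) (h' : f' = g')
    (α : X.Two f f') : castTwo h h' α ≍ α := by
  subst h h'; rfl

theorem castTwo_vid {a b : O} {f g : X.Hom a b} (h : f = g) :
    castTwo h h (X.vid f) = X.vid g := by
  subst h; rfl

theorem castTwo_vcomp {a b : O} {f f' g g' k k' : X.Hom a b}
    (hf : f = f') (hg : g = g') (hk : k = k') (α : X.Two f g) (β : X.Two g k) :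
    castTwo hf hk (X.vcomp α β) = X.vcomp (castTwo hf hg α) (castTwo hg hk β) := by
  subst hf hg hk; rfl

variable (X)

/-- The track category `X(φ)` of the paper. -/
def pullback (A : CatO O) (φ : CatOHom A X.underlying) : TrackO O where
  Hom := A.Hom
  id := A.id
  comp := A.comp
  id_comp := A.id_comp
  comp_id := A.comp_id
  assoc := A.assoc
  Two f g := X.Two (φ.map f) (φ.map g)
  vid f := X.vid (φ.map f)
  vcomp := X.vcomp
  vid_comp := X.vid_comp
  vcomp_id := X.vcomp_id
  vassoc := X.vassoc
  vinv := X.vinv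
  vinv_vcomp := X.vinv_vcomp
  vcomp_vinv := X.vcomp_vinv
  hcomp {_ _ _ f f' g g'} α β :=
    castTwo (φ.map_comp f g).symm (φ.map_comp f' g').symm (X.hcomp α β)
  hcomp_vid _ _ := (congrArg (castTwo _ _) (X.hcomp_vid _ _)).trans (castTwo_vid _)
  interchange α α' β β' :=
    (congrArg (castTwo _ _) (X.interchange α α' β β')).trans (castTwo_vcomp _ _ _ _ _)

def pullbackProj (A : CatO O) (φ : CatOHom A X.underlying) : TrackOHom (X.pullback A φ) X where
  map1 := φ.map
  map2 α := α
  map1_id := φ.map_id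
  map1_comp := φ.map_comp
  map2_vid _ := rfl
  map2_vcomp _ _ := rfl

theorem pullbackProj_is2Equivalence {A : CatO O} {φ : CatOHom A X.underlying}
    (hφ : ∀ {a b : O}, Function.Surjective (φ.map : A.Hom a b → X.Hom a b)) :
    (X.pullbackProj A φ).Is2Equivalence :=
  ⟨fun _ _ => Function.bijective_id, fun h =>
    let ⟨f, hf⟩ := hφ h
    ⟨f, ⟨castTwo rfl hf (X.vid (φ.map f))⟩⟩⟩

/-- The free resolution `S X = X(ε)`. -/
def freeResolution : TrackO O :=
  X.pullback (CatO.free X.Hom) X.counit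

end TrackO

namespace TrackOHom

variable {X Y : TrackO O}

theorem ext_heq {F G : TrackOHom X Y}
    (h₁ : ∀ {a b : O} (f : X.Hom a b), F.map1 f = G.map1 f)
    (h₂ : ∀ {a b : O} {f g : X.Hom a b} (α : X.Two f g), F.map2 α ≍ G.map2 α) :
    F = G := by
  obtain ⟨m₁, m₂, _, _, _, _⟩ := F
  obtain ⟨n₁, n₂, _, _, _, _⟩ := G
  obtain rfl : @m₁ = @n₁ := by funext a b f; exact h₁ f
  obtain rfl : @m₂ = @n₂ := by funext a b f g α; exact eq_of_heq (h₂ α)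
  rfl

def pullbackMap (F : TrackOHom X Y) {A B : CatO O} {φ : CatOHom A X.underlying}
    {ψ : CatOHom B Y.underlying} (G : CatOHom A B)
    (h : ∀ {a b : O} (f : A.Hom a b), ψ.map (G.map f) = F.map1 (φ.map f)) :
    TrackOHom (X.pullback A φ) (Y.pullback B ψ) where
  map1 := G.map
  map2 {_ _ f g} α := Y.castTwo (h f).symm (h g).symm (F.map2 α)
  map1_id := G.map_id
  map1_comp := G.map_comp
  map2_vid _ := (congrArg (Y.castTwo _ _) (F.map2_vid _)).trans (TrackO.castTwo_vid _)
  map2_vcomp α β :=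
    (congrArg (Y.castTwo _ _) (F.map2_vcomp α β)).trans (TrackO.castTwo_vcomp _ _ _ _ _)

theorem pullbackMap_comp'_pullbackProj (F : TrackOHom X Y) {A B : CatO O}
    {φ : CatOHom A X.underlying} {ψ : CatOHom B Y.underlying} (G : CatOHom A B)
    (h : ∀ {a b : O} (f : A.Hom a b), ψ.map (G.map f) = F.map1 (φ.map f)) :
    (F.pullbackMap G h).comp' (Y.pullbackProj B ψ) = (X.pullbackProj A φ).comp' F :=
  ext_heq h fun _ => TrackO.castTwo_heq _ _ _

def freeMap (F : TrackOHom X Y) : CatOHom (CatO.free X.Hom) (CatO.free Y.Hom) :=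
  CatO.lift (CatO.free Y.Hom) fun e => GraphPath.single (F.map1 e)

theorem counit_map_freeMap (F : TrackOHom X Y) {a b : O} (p : GraphPath X.Hom a b) :
    Y.counit.map (F.freeMap.map p) = F.map1 (X.counit.map p) := by
  induction p with
  | nil a => exact (F.map1_id a).symm
  | cons e p ih => exact (congrArg (Y.comp (F.map1 e)) ih).trans (F.map1_comp e _).symm

end TrackOHom

theorem exists_free_resolution_functor_S (O : Type u) :
    ∃ (S : TrackO O → TrackO O)
      (Smor : ∀ {X Y : TrackO O}, TrackOHom X Y → TrackOHom (S X) (S Y))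
      (s : ∀ X : TrackO O, TrackOHom (S X) X),
      -- (a) the underlying category `(S X)₀ = FVX₀` is free
      (∀ X : TrackO O, (S X).underlying.IsFree) ∧
      -- (b) `s_X : S(X) → X` is a 2-equivalence
      (∀ X : TrackO O, (s X).Is2Equivalence) ∧
      -- `s` is natural in `X`
      (∀ {X Y : TrackO O} (F : TrackOHom X Y),
        TrackOHom.comp' (Smor F) (s Y) = TrackOHom.comp' (s X) F) :=
  ⟨TrackO.freeResolution, fun F => F.pullbackMap F.freeMap F.counit_map_freeMap,
    fun X => X.pullbackProj _ X.counit,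
    fun X => CatO.free_isFree X.Hom,
    fun X => X.pullbackProj_is2Equivalence X.counit_surjective,
    fun F => F.pullbackMap_comp'_pullbackProj F.freeMap F.counit_map_freeMap⟩
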